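/- arXiv:2411.01901 — 6 statements merged into one kernel-verified Lean document; each statement's English description precedes it below -/
import Mathlib

section
/- For a function f : ℝ → ℂ, the following three conditions are equivalent: (a) there is a constant C > 0 such that |f(s) − f(t)| ≤ C·|s − t|·(1 + |t|)⁻¹ for all s, t ∈ ℝ; (b) there is a constant C > 0 such that |f(s) − f(t)| ≤ C·|s − t|/(1 + |s| + |t|) for all s, t ∈ ℝ; (c) the function s ↦ (s + i)·f(s) (with values in ℂ) is Lipschitz on ℝ. -/
/-!
The weight `1 + |s|` is comparable to `‖s + i‖`, and each of the conditions forces `f` to be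
bounded: (a) gives `‖f u - f 0‖ ≤ C`, Lipschitzness of `g u = (u + i) f u` gives
`‖(u + i) f u‖ ≤ ‖f 0‖ + L |u|`. Then (a) and (c) are exchanged through the identities
`g s - g t = (s + i)(f s - f t) + (s - t) f t` and `(t + i)(f s - f t) = (t - s) f s + (g s - g t)`,
while (a) and (b) differ only by the symmetrisation `1 + |s| + |t| ≤ (1 + |s|) + (1 + |t|)`.
-/

open Complex

namespace Complex

theorem norm_ofReal_add_I_le (s : ℝ) : ‖(s : ℂ) + I‖ ≤ 1 + |s| := by
  calc ‖(s : ℂ) + I‖ ≤ ‖(s : ℂ)‖ + ‖I‖ := norm_add_le _ _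
    _ = 1 + |s| := by rw [norm_real, norm_I, Real.norm_eq_abs, add_comm]

theorem one_add_abs_le_two_mul_norm_ofReal_add_I (s : ℝ) : 1 + |s| ≤ 2 * ‖(s : ℂ) + I‖ := by
  have him : |((s : ℂ) + I).im| ≤ ‖(s : ℂ) + I‖ := abs_im_le_norm _
  have hre : |((s : ℂ) + I).re| ≤ ‖(s : ℂ) + I‖ := abs_re_le_norm _
  simp only [add_im, ofReal_im, I_im, zero_add, abs_one, add_re, ofReal_re, I_re,
    add_zero] at him hre
  linarith

end Complex

section NormedAddCommGroup

variable {E : Type*} [NormedAddCommGroup E] {f : ℝ → E} {C : ℝ}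

theorem norm_sub_le_div_one_add_abs_add_abs
    (h : ∀ s t : ℝ, ‖f s - f t‖ ≤ C * |s - t| * (1 + |t|)⁻¹) (s t : ℝ) :
    ‖f s - f t‖ ≤ 2 * C * |s - t| / (1 + |s| + |t|) := by
  have hs : (1 + |s|) * ‖f s - f t‖ ≤ C * |s - t| := by
    have := h t s
    rw [norm_sub_rev, abs_sub_comm, ← div_eq_mul_inv, le_div_iff₀ (by positivity)] at this
    linarith
  have ht : (1 + |t|) * ‖f s - f t‖ ≤ C * |s - t| := by
    have := h s t
    rw [← div_eq_mul_inv, le_div_iff₀ (by positivity)] at this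
    linarith
  rw [le_div_iff₀ (by positivity)]
  nlinarith [norm_nonneg (f s - f t)]

theorem norm_sub_le_mul_inv_one_add_abs (hC : 0 ≤ C)
    (h : ∀ s t : ℝ, ‖f s - f t‖ ≤ C * |s - t| / (1 + |s| + |t|)) (s t : ℝ) :
    ‖f s - f t‖ ≤ C * |s - t| * (1 + |t|)⁻¹ := by
  rw [← div_eq_mul_inv]
  exact (h s t).trans <|
    div_le_div_of_nonneg_left (by positivity) (by positivity) (by linarith [abs_nonneg s])

theorem norm_le_of_norm_sub_le_mul_inv_one_add_abs (hC : 0 ≤ C)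
    (h : ∀ s t : ℝ, ‖f s - f t‖ ≤ C * |s - t| * (1 + |t|)⁻¹) (u : ℝ) :
    ‖f u‖ ≤ ‖f 0‖ + C := by
  have hu : ‖f u - f 0‖ ≤ C := by
    have := h 0 u
    rw [norm_sub_rev, zero_sub, abs_neg, ← div_eq_mul_inv, le_div_iff₀ (by positivity)] at this
    nlinarith [abs_nonneg u]
  linarith [norm_le_insert' (f u) (f 0)]

end NormedAddCommGroup

section NormedSpace

variable {E : Type*} [NormedAddCommGroup E] [NormedSpace ℂ E] {f : ℝ → E} {B C L : ℝ}

theorem norm_ofReal_sub_smul (s t : ℝ) (x : E) : ‖((s : ℂ) - t) • x‖ = |s - t| * ‖x‖ := by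
  rw [norm_smul, ← ofReal_sub, norm_real, Real.norm_eq_abs]

theorem norm_smul_sub_smul_le_of_norm_sub_le
    (h : ∀ s t : ℝ, ‖f s - f t‖ ≤ C * |s - t| * (1 + |t|)⁻¹) (hB : ∀ u, ‖f u‖ ≤ B) (s t : ℝ) :
    ‖((s : ℂ) + I) • f s - ((t : ℂ) + I) • f t‖ ≤ (C + B) * |s - t| := by
  have hsplit : ((s : ℂ) + I) • f s - ((t : ℂ) + I) • f t
      = ((s : ℂ) + I) • (f s - f t) + ((s : ℂ) - t) • f t := by
    simp only [smul_sub, sub_smul, add_smul]; abel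
  have hfirst : ‖((s : ℂ) + I) • (f s - f t)‖ ≤ C * |s - t| := by
    have hts := h t s
    rw [norm_sub_rev, abs_sub_comm] at hts
    calc ‖((s : ℂ) + I) • (f s - f t)‖ ≤ (1 + |s|) * (C * |s - t| * (1 + |s|)⁻¹) := by
          rw [norm_smul]
          exact mul_le_mul (norm_ofReal_add_I_le s) hts (norm_nonneg _) (by positivity)
      _ = C * |s - t| := by field_simp
  have hsecond : ‖((s : ℂ) - t) • f t‖ ≤ B * |s - t| := by
    rw [norm_ofReal_sub_smul, mul_comm B]
    exact mul_le_mul_of_nonneg_left (hB t) (abs_nonneg _)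
  calc _ ≤ ‖((s : ℂ) + I) • (f s - f t)‖ + ‖((s : ℂ) - t) • f t‖ := by
        rw [hsplit]; exact norm_add_le _ _
    _ ≤ (C + B) * |s - t| := by linarith

theorem norm_le_of_norm_smul_sub_smul_le (hL : 0 ≤ L)
    (h : ∀ s t : ℝ, ‖((s : ℂ) + I) • f s - ((t : ℂ) + I) • f t‖ ≤ L * |s - t|) (u : ℝ) :
    ‖f u‖ ≤ 2 * (‖f 0‖ + L) := by
  have hg : ‖(u : ℂ) + I‖ * ‖f u‖ ≤ ‖f 0‖ + L * |u| := by
    have h0 := h u 0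
    rw [ofReal_zero, zero_add, sub_zero] at h0
    have := norm_le_insert' (((u : ℂ) + I) • f u) (I • f 0)
    rw [norm_smul, norm_smul, norm_I, one_mul] at this
    linarith
  have hweight : (1 + |u|) * ‖f u‖ ≤ 2 * (‖f 0‖ + L * |u|) := by
    nlinarith [one_add_abs_le_two_mul_norm_ofReal_add_I u, norm_nonneg (f u)]
  refine le_of_mul_le_mul_left (a := 1 + |u|) ?_ (by positivity)
  nlinarith [abs_nonneg u, norm_nonneg (f 0)]

theorem norm_sub_le_of_norm_smul_sub_smul_le
    (h : ∀ s t : ℝ, ‖((s : ℂ) + I) • f s - ((t : ℂ) + I) • f t‖ ≤ L * |s - t|)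
    (hB : ∀ u, ‖f u‖ ≤ B) (s t : ℝ) :
    ‖f s - f t‖ ≤ 2 * (B + L) * |s - t| * (1 + |t|)⁻¹ := by
  have hsplit : ((t : ℂ) + I) • (f s - f t)
      = ((t : ℂ) - s) • f s + (((s : ℂ) + I) • f s - ((t : ℂ) + I) • f t) := by
    simp only [smul_sub, sub_smul, add_smul]; abel
  have hmain : ‖(t : ℂ) + I‖ * ‖f s - f t‖ ≤ (B + L) * |s - t| := by
    have hfirst : ‖((t : ℂ) - s) • f s‖ ≤ B * |s - t| := by
      rw [norm_ofReal_sub_smul, abs_sub_comm, mul_comm B]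
      exact mul_le_mul_of_nonneg_left (hB s) (abs_nonneg _)
    calc ‖(t : ℂ) + I‖ * ‖f s - f t‖
        ≤ ‖((t : ℂ) - s) • f s‖ + ‖((s : ℂ) + I) • f s - ((t : ℂ) + I) • f t‖ := by
          rw [← norm_smul, hsplit]; exact norm_add_le _ _
      _ ≤ (B + L) * |s - t| := by linarith [h s t]
  rw [← div_eq_mul_inv, le_div_iff₀ (by positivity)]
  nlinarith [one_add_abs_le_two_mul_norm_ofReal_add_I t, norm_nonneg (f s - f t)]

end NormedSpace

/-- Theorem 2.4 (equivalence of conditions (a), (b), (c)): for a function `f : ℝ → ℂ`,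
the estimate `|f s − f t| ≤ C |s − t| (1 + |t|)⁻¹` is equivalent to the estimate
`|f s − f t| ≤ C |s − t| / (1 + |s| + |t|)`, and both are equivalent to the Lipschitzness
of the function `s ↦ (s + i) f s`. -/
theorem stmt0 (f : ℝ → ℂ) :
    ((∃ C : ℝ, 0 < C ∧ ∀ s t : ℝ, ‖f s - f t‖ ≤ C * |s - t| * (1 + |t|)⁻¹) ↔
      (∃ C : ℝ, 0 < C ∧ ∀ s t : ℝ, ‖f s - f t‖ ≤ C * |s - t| / (1 + |s| + |t|))) ∧
    ((∃ C : ℝ, 0 < C ∧ ∀ s t : ℝ, ‖f s - f t‖ ≤ C * |s - t| * (1 + |t|)⁻¹) ↔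
      (∃ L : ℝ, 0 ≤ L ∧ ∀ s t : ℝ,
        ‖((s : ℂ) + I) * f s - ((t : ℂ) + I) * f t‖ ≤ L * |s - t|)) := by
  refine ⟨⟨?_, ?_⟩, ⟨?_, ?_⟩⟩
  · rintro ⟨C, hC, h⟩
    exact ⟨2 * C, by positivity, norm_sub_le_div_one_add_abs_add_abs h⟩
  · rintro ⟨C, hC, h⟩
    exact ⟨C, hC, norm_sub_le_mul_inv_one_add_abs hC.le h⟩
  · rintro ⟨C, hC, h⟩
    exact ⟨C + (‖f 0‖ + C), by positivity, norm_smul_sub_smul_le_of_norm_sub_le h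
      (norm_le_of_norm_sub_le_mul_inv_one_add_abs hC.le h)⟩
  · rintro ⟨L, hL, h⟩
    have hB (u : ℝ) : ‖f u‖ ≤ 2 * (‖f 0‖ + L) + 1 :=
      (norm_le_of_norm_smul_sub_smul_le hL h u).trans (le_add_of_nonneg_right zero_le_one)
    exact ⟨_, by positivity, norm_sub_le_of_norm_smul_sub_smul_le h hB⟩
end

section
/- Let f : ℝ → ℂ be continuous and let k > 0 be such that for every complex Hilbert space H and all bounded self-adjoint operators A, B on H one has ‖f(B) − f(A)‖ ≤ k·‖(B − A)(A + iI)⁻¹‖. Then for all s, t ∈ ℝ, |f(s) − f(t)| ≤ k·|s − t|/|t + i|; in particular |f(s) − f(t)| ≤ √2·k·|s − t|·(1 + |t|)⁻¹ for all s, t ∈ ℝ. -/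
/-
On scalar operators `A = t I`, `B = s I` (in any nonzero Hilbert space, e.g. a one-dimensional one)
`f(B) − f(A) = (f s − f t) I` and `(B − A)(A + iI)⁻¹ = (s − t)(t + i)⁻¹ I`, so the operator
inequality reads `|f s − f t| ≤ k |s − t| / |t + i|`. The second bound follows from
`1 + |t| ≤ √2 |t + i|`.
-/

open Complex

/-- Functional calculus `f(A)` for a continuous `f : ℝ → ℂ` and a (self-adjoint, hence
normal) bounded operator `A`, obtained by applying `z ↦ f (Re z)` to `A` via the
continuous functional calculus. -/
noncomputable def opFC {H : Type*} [NormedAddCommGroup H] [InnerProductSpace ℂ H]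
    [CompleteSpace H] (f : ℝ → ℂ) (A : H →L[ℂ] H) : H →L[ℂ] H :=
  cfc (fun z : ℂ => f z.re) A

theorem Ring.inverse_map {G₀ M₀ F : Type*} [GroupWithZero G₀] [MonoidWithZero M₀] [FunLike F G₀ M₀]
    [MonoidWithZeroHomClass F G₀ M₀] (φ : F) (c : G₀) : Ring.inverse (φ c) = φ c⁻¹ := by
  rcases eq_or_ne c 0 with rfl | hc
  · simp
  · exact Ring.inverse_unit ((Units.mk0 c hc).map (φ : G₀ →* M₀))

theorem Complex.abs_re_add_abs_im_le_sqrt_two_mul_norm (z : ℂ) :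
    |z.re| + |z.im| ≤ √2 * ‖z‖ := by
  rw [← Real.sqrt_sq (norm_nonneg z), ← Real.sqrt_mul zero_le_two, Complex.sq_norm,
    Complex.normSq_apply]
  apply Real.le_sqrt_of_sq_le
  nlinarith [sq_abs z.re, sq_abs z.im, sq_nonneg (|z.re| - |z.im|)]

theorem Complex.ofReal_add_I_ne_zero (t : ℝ) : (t : ℂ) + I ≠ 0 := by
  intro h
  simpa using congrArg Complex.im h

section ScalarOperators

variable {H : Type*} [NormedAddCommGroup H] [InnerProductSpace ℂ H] [CompleteSpace H]

theorem isSelfAdjoint_algebraMap_ofReal (r : ℝ) :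
    IsSelfAdjoint (algebraMap ℂ (H →L[ℂ] H) r) :=
  IsSelfAdjoint.algebraMap _ (Complex.conj_ofReal r)

theorem opFC_algebraMap_ofReal (f : ℝ → ℂ) (r : ℝ) :
    opFC f (algebraMap ℂ (H →L[ℂ] H) r) = algebraMap ℂ (H →L[ℂ] H) (f r) := by
  simp [opFC, cfc_algebraMap]

theorem norm_sub_le_of_opFC_sub_le [Nontrivial H] (f : ℝ → ℂ) (k : ℝ)
    (h : ∀ A B : H →L[ℂ] H, IsSelfAdjoint A → IsSelfAdjoint B →
      ‖opFC f B - opFC f A‖ ≤ k * ‖(B - A) * Ring.inverse (A + Complex.I • 1)‖) (s t : ℝ) :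
    ‖f s - f t‖ ≤ k * |s - t| / ‖(t : ℂ) + I‖ := by
  have key := h _ _ (isSelfAdjoint_algebraMap_ofReal t) (isSelfAdjoint_algebraMap_ofReal s)
  rw [opFC_algebraMap_ofReal, opFC_algebraMap_ofReal, ← Algebra.algebraMap_eq_smul_one,
    ← map_add, Ring.inverse_map, ← map_sub, ← map_sub, ← map_mul, norm_algebraMap',
    norm_algebraMap', norm_mul, norm_inv, ← Complex.ofReal_sub, Complex.norm_real,
    Real.norm_eq_abs] at key
  rwa [mul_div_assoc, div_eq_mul_inv]

end ScalarOperators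

theorem stmt1_general (f : ℝ → ℂ) (k : ℝ) (hk : 0 < k)
    (h : ∀ (H : Type u) (_ : NormedAddCommGroup H) (_ : InnerProductSpace ℂ H)
      (_ : CompleteSpace H) (A B : H →L[ℂ] H), IsSelfAdjoint A → IsSelfAdjoint B →
      ‖opFC f B - opFC f A‖ ≤ k * ‖(B - A) * Ring.inverse (A + Complex.I • 1)‖) :
    ∀ s t : ℝ,
      ‖f s - f t‖ ≤ k * |s - t| / ‖(t : ℂ) + I‖ ∧
      ‖f s - f t‖ ≤ Real.sqrt 2 * k * |s - t| * (1 + |t|)⁻¹ := by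
  intro s t
  have hst := norm_sub_le_of_opFC_sub_le f k
    (h (EuclideanSpace ℂ PUnit.{u + 1}) inferInstance inferInstance inferInstance) s t
  refine ⟨hst, hst.trans ?_⟩
  have hnorm : 0 < ‖(t : ℂ) + I‖ := norm_pos_iff.mpr (Complex.ofReal_add_I_ne_zero t)
  have hlow : 1 + |t| ≤ √2 * ‖(t : ℂ) + I‖ := by
    rw [add_comm]
    simpa using Complex.abs_re_add_abs_im_le_sqrt_two_mul_norm (t + I)
  rw [← div_eq_mul_inv, div_le_div_iff₀ hnorm (by positivity)]
  calc k * |s - t| * (1 + |t|) ≤ k * |s - t| * (√2 * ‖(t : ℂ) + I‖) := by gcongr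
    _ = √2 * k * |s - t| * ‖(t : ℂ) + I‖ := by ring

/-- Necessity part of Theorem 2.4: if `f` is continuous and
`‖f(B) − f(A)‖ ≤ k ‖(B − A)(A + iI)⁻¹‖` for all bounded self-adjoint operators `A, B`
on every complex Hilbert space, then `|f s − f t| ≤ k |s − t| / |t + i|`, and in
particular `|f s − f t| ≤ √2 · k · |s − t| · (1 + |t|)⁻¹`, for all `s, t ∈ ℝ`. -/
theorem stmt1 (f : ℝ → ℂ) (hf : Continuous f) (k : ℝ) (hk : 0 < k)
    (h : ∀ (H : Type u) (_ : NormedAddCommGroup H) (_ : InnerProductSpace ℂ H)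
      (_ : CompleteSpace H) (A B : H →L[ℂ] H), IsSelfAdjoint A → IsSelfAdjoint B →
      ‖opFC f B - opFC f A‖ ≤ k * ‖(B - A) * Ring.inverse (A + Complex.I • 1)‖) :
    ∀ s t : ℝ,
      ‖f s - f t‖ ≤ k * |s - t| / ‖(t : ℂ) + I‖ ∧
      ‖f s - f t‖ ≤ Real.sqrt 2 * k * |s - t| * (1 + |t|)⁻¹ :=
  stmt1_general f k hk h
end

section
/- Let H be a complex Hilbert space, let A be a densely defined symmetric unbounded operator in H (a LinearPMap with dense domain satisfying ⟪A u, v⟫ = ⟪u, A v⟫ for all u, v in its domain), and let T : H → H be a compact (bounded) linear operator. Then for every d > 0 there exists c > 0 such that for all v in the domain of A, ‖T(A v + i·v)‖ ≤ c‖v‖ + d‖A v‖. -/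
open scoped InnerProductSpace

open Filter

/-- Lemma 2.2: let `A` be a densely defined symmetric (possibly unbounded) operator in a
complex Hilbert space `H` and let `T : H → H` be a compact bounded operator. Then the
relatively compact perturbation `K = T (A + iI)` is strictly dominated by `A` with an
arbitrarily small coefficient in front of `‖A v‖`: for every `d > 0` there is `c > 0`
with `‖T (A v + i v)‖ ≤ c ‖v‖ + d ‖A v‖` for all `v ∈ Dom A`. -/
theorem stmt4 {H : Type*} [NormedAddCommGroup H] [InnerProductSpace ℂ H] [CompleteSpace H]
    (A : H →ₗ.[ℂ] H) (hdense : Dense (A.domain : Set H))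
    (hsymm : ∀ u v : A.domain, ⟪A u, (v : H)⟫_ℂ = ⟪(u : H), A v⟫_ℂ)
    (T : H →L[ℂ] H) (hT : IsCompactOperator T) :
    ∀ d : ℝ, 0 < d → ∃ c : ℝ, 0 < c ∧ ∀ v : A.domain,
      ‖T (A v + Complex.I • (v : H))‖ ≤ c * ‖(v : H)‖ + d * ‖A v‖ := by
  intro d hd
  by_contra hcon
  push_neg at hcon
  have hsel : ∀ n : ℕ, ∃ v : A.domain,
      ((n : ℝ) + 1) * ‖(v : H)‖ + d * ‖A v‖ < ‖T (A v + Complex.I • (v : H))‖ := by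
    intro n
    obtain ⟨v, hv⟩ := hcon ((n : ℝ) + 1) (by positivity)
    exact ⟨v, hv⟩
  choose v hv using hsel
  set r : ℕ → ℝ := fun n => ‖A (v n) + Complex.I • ((v n : H))‖ with hr
  have hrpos : ∀ n, 0 < r n := by
    intro n
    rw [hr]
    rw [norm_pos_iff]
    intro h0
    have h1 := hv n
    rw [h0, map_zero, norm_zero] at h1
    have h2 : (0:ℝ) ≤ ((n:ℝ)+1) * ‖(v n : H)‖ + d * ‖A (v n)‖ := by positivity
    linarith
  set u : ℕ → A.domain := fun n => (((r n)⁻¹ : ℝ) : ℂ) • v n with hu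
  set W : ℕ → H := fun n => A (u n) + Complex.I • ((u n : H)) with hW
  have hWeq : ∀ n, W n = (((r n)⁻¹ : ℝ) : ℂ) • (A (v n) + Complex.I • ((v n : H))) := by
    intro n
    simp only [hW, hu, A.map_smul, Submodule.coe_smul, smul_add, smul_comm Complex.I]
  have hWnorm : ∀ n, ‖W n‖ = 1 := by
    intro n
    rw [hWeq n, norm_smul, Complex.norm_real, Real.norm_eq_abs,
      abs_of_pos (inv_pos.mpr (hrpos n))]
    exact inv_mul_cancel₀ (hrpos n).ne'
  have hucoe : ∀ n, ‖((u n : H))‖ = (r n)⁻¹ * ‖(v n : H)‖ := by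
    intro n
    simp only [hu, Submodule.coe_smul, norm_smul, Complex.norm_real, Real.norm_eq_abs,
      abs_of_pos (inv_pos.mpr (hrpos n))]
  have hAu : ∀ n, ‖A (u n)‖ = (r n)⁻¹ * ‖A (v n)‖ := by
    intro n
    simp only [hu, A.map_smul, norm_smul, Complex.norm_real, Real.norm_eq_abs,
      abs_of_pos (inv_pos.mpr (hrpos n))]
  have hun : ∀ n : ℕ, ((n : ℝ) + 1) * ‖((u n : H))‖ + d * ‖A (u n)‖ < ‖T (W n)‖ := by
    intro n
    have h1 := mul_lt_mul_of_pos_left (hv n) (inv_pos.mpr (hrpos n))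
    have h2 : ‖T (W n)‖ = (r n)⁻¹ * ‖T (A (v n) + Complex.I • ((v n : H)))‖ := by
      rw [hWeq n, map_smul, norm_smul, Complex.norm_real, Real.norm_eq_abs,
        abs_of_pos (inv_pos.mpr (hrpos n))]
    rw [h2, hucoe n, hAu n]
    nlinarith [h1]
  have hTle : ∀ n, ‖T (W n)‖ ≤ ‖T‖ := by
    intro n
    have := T.le_opNorm (W n)
    rwa [hWnorm n, mul_one] at this
  have hu_small : ∀ n, ‖((u n : H))‖ ≤ ‖T‖ / ((n : ℝ) + 1) := by
    intro n
    have h1 := hun n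
    have h2 := hTle n
    have h3 : (0:ℝ) ≤ d * ‖A (u n)‖ := by positivity
    rw [le_div_iff₀ (by positivity : (0:ℝ) < (n:ℝ)+1)]
    nlinarith
  have hnat : Tendsto (fun n : ℕ => (n : ℝ) + 1) atTop atTop :=
    tendsto_atTop_add_const_right atTop 1 tendsto_natCast_atTop_atTop
  have hu0 : Tendsto (fun n => ‖((u n : H))‖) atTop (nhds 0) := by
    refine squeeze_zero (fun n => norm_nonneg _) hu_small ?_
    exact tendsto_const_nhds.div_atTop hnat
  -- weak convergence of W to 0, first against elements of the domain
  have hweakD : ∀ z : A.domain, Tendsto (fun n => ⟪W n, (z : H)⟫_ℂ) atTop (nhds 0) := by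
    intro z
    have hbound : ∀ n, ‖⟪W n, (z : H)⟫_ℂ‖ ≤ ‖((u n : H))‖ * (‖A z‖ + ‖(z : H)‖) := by
      intro n
      have heq : ⟪W n, (z : H)⟫_ℂ
          = ⟪((u n : H)), A z⟫_ℂ + (starRingEnd ℂ) Complex.I * ⟪((u n : H)), (z : H)⟫_ℂ := by
        rw [hW]
        rw [inner_add_left, inner_smul_left, hsymm (u n) z]
      rw [heq]
      calc ‖⟪((u n : H)), A z⟫_ℂ + (starRingEnd ℂ) Complex.I * ⟪((u n : H)), (z : H)⟫_ℂ‖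
          ≤ ‖⟪((u n : H)), A z⟫_ℂ‖ + ‖(starRingEnd ℂ) Complex.I * ⟪((u n : H)), (z : H)⟫_ℂ‖ :=
            norm_add_le _ _
        _ ≤ ‖((u n : H))‖ * ‖A z‖ + 1 * (‖((u n : H))‖ * ‖(z : H)‖) := by
            gcongr
            · exact norm_inner_le_norm _ _
            · rw [norm_mul]
              gcongr
              · simp [Complex.norm_I]
              · exact norm_inner_le_norm _ _
        _ = ‖((u n : H))‖ * (‖A z‖ + ‖(z : H)‖) := by ring
    refine squeeze_zero_norm hbound ?_
    have := hu0.mul_const (‖A z‖ + ‖(z : H)‖)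
    simpa using this
  have hweak : ∀ z : H, Tendsto (fun n => ⟪W n, z⟫_ℂ) atTop (nhds 0) := by
    intro z
    rw [Metric.tendsto_atTop]
    intro ε hε
    obtain ⟨z', hz'mem, hz'⟩ := Metric.mem_closure_iff.mp (hdense z) (ε/2) (by linarith)
    obtain ⟨N, hN⟩ := Metric.tendsto_atTop.mp (hweakD ⟨z', hz'mem⟩) (ε/2) (by linarith)
    refine ⟨N, fun n hn => ?_⟩
    have h1 := hN n hn
    rw [dist_zero_right] at h1 ⊢
    have h2 : ⟪W n, z⟫_ℂ = ⟪W n, (z' : H)⟫_ℂ + ⟪W n, z - z'⟫_ℂ := by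
      rw [inner_sub_right]; ring
    rw [h2]
    calc ‖⟪W n, (z' : H)⟫_ℂ + ⟪W n, z - z'⟫_ℂ‖
        ≤ ‖⟪W n, (z' : H)⟫_ℂ‖ + ‖⟪W n, z - z'⟫_ℂ‖ := norm_add_le _ _
      _ ≤ ‖⟪W n, (z' : H)⟫_ℂ‖ + ‖W n‖ * ‖z - z'‖ := by
          gcongr; exact norm_inner_le_norm _ _
      _ < ε/2 + 1 * (ε/2) := by
          apply add_lt_add_of_lt_of_le h1
          rw [hWnorm n]
          have : ‖z - z'‖ = dist z z' := by rw [dist_eq_norm]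
          rw [this]
          nlinarith
      _ = ε := by ring
  -- compactness: extract a convergent subsequence of T (W n)
  have hK : IsCompact (closure (T '' Metric.closedBall 0 1)) :=
    hT.isCompact_closure_image_closedBall 1
  have hmem : ∀ n, T (W n) ∈ closure (T '' Metric.closedBall 0 1) := by
    intro n
    apply subset_closure
    exact ⟨W n, by simp [Metric.mem_closedBall, dist_zero_right, hWnorm n], rfl⟩
  obtain ⟨y, _, φ, hφ, hconv⟩ := hK.tendsto_subseq hmem
  -- the limit y is zero
  have hy0 : y = 0 := by
    have h1 : Tendsto (fun k => ⟪T (W (φ k)), y⟫_ℂ) atTop (nhds ⟪y, y⟫_ℂ) :=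
      hconv.inner tendsto_const_nhds
    have h2 : ∀ k, ⟪T (W (φ k)), y⟫_ℂ = ⟪W (φ k), ContinuousLinearMap.adjoint T y⟫_ℂ := by
      intro k
      rw [ContinuousLinearMap.adjoint_inner_right]
    have h3 : Tendsto (fun k => ⟪W (φ k), ContinuousLinearMap.adjoint T y⟫_ℂ) atTop (nhds 0) :=
      (hweak (ContinuousLinearMap.adjoint T y)).comp hφ.tendsto_atTop
    have h4 : Tendsto (fun k => ⟪T (W (φ k)), y⟫_ℂ) atTop (nhds 0) := by
      simpa only [h2] using h3
    have h5 : ⟪y, y⟫_ℂ = 0 := tendsto_nhds_unique h1 h4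
    exact inner_self_eq_zero.mp h5
  -- but y has norm at least d
  have hAu_lb : ∀ n, 1 - ‖((u n : H))‖ ≤ ‖A (u n)‖ := by
    intro n
    have h1 : A (u n) = W n - Complex.I • ((u n : H)) := by rw [hW]; exact (add_sub_cancel_right _ _).symm
    have h2 := norm_sub_norm_le (W n) (Complex.I • ((u n : H)))
    rw [← h1, hWnorm n, norm_smul, Complex.norm_I, one_mul] at h2
    exact h2
  have hlb : ∀ k, d * (1 - ‖((u (φ k) : H))‖) ≤ ‖T (W (φ k))‖ := by
    intro k
    have h1 := hun (φ k)
    have h2 := hAu_lb (φ k)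
    have h3 : (0:ℝ) ≤ ((φ k : ℝ) + 1) * ‖((u (φ k) : H))‖ := by positivity
    nlinarith
  have hlim1 : Tendsto (fun k => d * (1 - ‖((u (φ k) : H))‖)) atTop (nhds d) := by
    have h : Tendsto (fun k => ‖((u (φ k) : H))‖) atTop (nhds 0) := hu0.comp hφ.tendsto_atTop
    have h2 : Tendsto (fun k => d * ((1:ℝ) - ‖((u (φ k) : H))‖)) atTop (nhds (d * ((1:ℝ) - 0))) :=
      ((tendsto_const_nhds (x := (1:ℝ))).sub h).const_mul d
    simpa using h2
  have hlim2 : Tendsto (fun k => ‖T (W (φ k))‖) atTop (nhds ‖y‖) := hconv.norm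
  have hfin : d ≤ ‖y‖ := le_of_tendsto_of_tendsto' hlim1 hlim2 hlb
  rw [hy0, norm_zero] at hfin
  linarith
end

section
/- Let H be a complex Hilbert space, let A be a densely defined symmetric unbounded operator in H (a LinearPMap with dense domain satisfying ⟪A u, v⟫ = ⟪u, A v⟫ for all u, v in its domain), and let φ ∈ H. Then for every ε > 0 there exists c > 0 such that for all v in the domain of A, |⟪A v + i·v, φ⟫| ≤ c‖v‖ + ε‖A v‖. -/
open scoped InnerProductSpace

/-- The rank-one case inside the proof of Lemma 2.2: let `A` be a densely defined
symmetric (possibly unbounded) operator in a complex Hilbert space `H` and let `φ ∈ H`.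
Then for every `ε > 0` there is `c > 0` such that
`|⟪(A + iI) v, φ⟫| ≤ c ‖v‖ + ε ‖A v‖` for all `v ∈ Dom A`. -/
theorem stmt5 {H : Type*} [NormedAddCommGroup H] [InnerProductSpace ℂ H] [CompleteSpace H]
    (A : H →ₗ.[ℂ] H) (hdense : Dense (A.domain : Set H))
    (hsymm : ∀ u v : A.domain, ⟪A u, (v : H)⟫_ℂ = ⟪(u : H), A v⟫_ℂ)
    (φ : H) :
    ∀ ε : ℝ, 0 < ε → ∃ c : ℝ, 0 < c ∧ ∀ v : A.domain,
      ‖⟪A v + Complex.I • (v : H), φ⟫_ℂ‖ ≤ c * ‖(v : H)‖ + ε * ‖A v‖ := by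
  intro ε hε
  obtain ⟨φ₁, hφ₁, hdist⟩ := hdense.exists_dist_lt φ hε
  set u : A.domain := ⟨φ₁, hφ₁⟩
  refine ⟨‖A u‖ + ‖φ₁‖ + ε + 1, by positivity, fun v => ?_⟩
  have key : ⟪A v + Complex.I • (v : H), φ⟫_ℂ
      = (⟪(v : H), A u⟫_ℂ + (starRingEnd ℂ) Complex.I * ⟪(v : H), φ₁⟫_ℂ)
        + ⟪A v + Complex.I • (v : H), φ - φ₁⟫_ℂ := by
    rw [inner_sub_right]
    have h1 : ⟪A v + Complex.I • (v : H), φ₁⟫_ℂ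
        = ⟪(v : H), A u⟫_ℂ + (starRingEnd ℂ) Complex.I * ⟪(v : H), φ₁⟫_ℂ := by
      rw [inner_add_left, inner_smul_left]
      congr 1
      exact hsymm v u
    rw [h1]; ring
  rw [key]
  have hnorm2 : ‖⟪A v + Complex.I • (v : H), φ - φ₁⟫_ℂ‖ ≤ (‖A v‖ + ‖(v : H)‖) * ε := by
    calc ‖⟪A v + Complex.I • (v : H), φ - φ₁⟫_ℂ‖
        ≤ ‖A v + Complex.I • (v : H)‖ * ‖φ - φ₁‖ := norm_inner_le_norm _ _
      _ ≤ (‖A v‖ + ‖(v : H)‖) * ε := by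
          apply mul_le_mul _ _ (norm_nonneg _) (by positivity)
          · calc ‖A v + Complex.I • (v : H)‖ ≤ ‖A v‖ + ‖Complex.I • (v : H)‖ :=
                  norm_add_le _ _
              _ = ‖A v‖ + ‖(v : H)‖ := by rw [norm_smul, Complex.norm_I, one_mul]
          · rw [← dist_eq_norm]; exact hdist.le
  have hnorm1 : ‖⟪(v : H), A u⟫_ℂ + (starRingEnd ℂ) Complex.I * ⟪(v : H), φ₁⟫_ℂ‖
      ≤ (‖A u‖ + ‖φ₁‖) * ‖(v : H)‖ := by
    calc ‖⟪(v : H), A u⟫_ℂ + (starRingEnd ℂ) Complex.I * ⟪(v : H), φ₁⟫_ℂ‖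
        ≤ ‖⟪(v : H), A u⟫_ℂ‖ + ‖(starRingEnd ℂ) Complex.I * ⟪(v : H), φ₁⟫_ℂ‖ :=
          norm_add_le _ _
      _ ≤ ‖(v : H)‖ * ‖A u‖ + 1 * (‖(v : H)‖ * ‖φ₁‖) := by
          gcongr
          · exact norm_inner_le_norm _ _
          · rw [norm_mul]
            gcongr
            · simp [Complex.norm_I]
            · exact norm_inner_le_norm _ _
      _ = (‖A u‖ + ‖φ₁‖) * ‖(v : H)‖ := by ring
  calc ‖_ + _‖ ≤ _ + _ := norm_add_le _ _
    _ ≤ (‖A u‖ + ‖φ₁‖) * ‖(v : H)‖ + (‖A v‖ + ‖(v : H)‖) * ε :=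
        add_le_add hnorm1 hnorm2
    _ ≤ (‖A u‖ + ‖φ₁‖ + ε + 1) * ‖(v : H)‖ + ε * ‖A v‖ := by nlinarith [norm_nonneg (v : H), norm_nonneg (A v)]
end

section
/- Let H be a complex Hilbert space, let A and B be bounded self-adjoint operators on H and let R be any bounded operator on H. Let U = (A − iI)(A + iI)⁻¹ and V = (B − iI)(B + iI)⁻¹ be the Cayley transforms of A and B. Then V R − R U = 2i·(B + iI)⁻¹(B R − R A)(A + iI)⁻¹, and consequently ‖V R − R U‖ = 2‖(B + iI)⁻¹(B R − R A)(A + iI)⁻¹‖. -/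
open Complex

/-- For a bounded self-adjoint operator `T`, the operator `T + iI` is invertible,
since the spectrum of `T` is real. -/
lemma stmt9_aux_unit {H : Type*} [NormedAddCommGroup H] [InnerProductSpace ℂ H]
    [CompleteSpace H] (T : H →L[ℂ] H) (hT : IsSelfAdjoint T) :
    IsUnit (T + Complex.I • 1) := by
  have h : (-Complex.I) ∉ spectrum ℂ T := by
    intro h
    have := hT.im_eq_zero_of_mem_spectrum h
    simp at this
  rw [spectrum.notMem_iff, Algebra.algebraMap_eq_smul_one] at h
  have e : (-Complex.I) • (1 : H →L[ℂ] H) - T = -(T + Complex.I • 1) := by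
    rw [neg_smul]; abel
  rw [e, IsUnit.neg_iff] at h
  exact h

/-- The algebraic identity `V R − R U = 2i (B + iI)⁻¹ (B R − R A)(A + iI)⁻¹`. -/
lemma stmt9_aux_id {H : Type*} [NormedAddCommGroup H] [InnerProductSpace ℂ H]
    [CompleteSpace H] (A B R : H →L[ℂ] H) (hA : IsSelfAdjoint A) (hB : IsSelfAdjoint B) :
    ((B - Complex.I • 1) * Ring.inverse (B + Complex.I • 1)) * R -
        R * ((A - Complex.I • 1) * Ring.inverse (A + Complex.I • 1)) =
      (2 * Complex.I) •
        (Ring.inverse (B + Complex.I • 1) * (B * R - R * A) *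
          Ring.inverse (A + Complex.I • 1)) := by
  have hUA := stmt9_aux_unit A hA
  have hUB := stmt9_aux_unit B hB
  set sA := A + Complex.I • 1 with hsA
  set sB := B + Complex.I • 1 with hsB
  set iA := Ring.inverse sA with hiA
  set iB := Ring.inverse sB with hiB
  have mA : sA * iA = 1 := Ring.mul_inverse_cancel _ hUA
  have mA' : iA * sA = 1 := Ring.inverse_mul_cancel _ hUA
  have mB : sB * iB = 1 := Ring.mul_inverse_cancel _ hUB
  have mB' : iB * sB = 1 := Ring.inverse_mul_cancel _ hUB
  have cB : Commute (B - Complex.I • 1) iB := by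
    have h1 : Commute sB iB := mB.trans mB'.symm
    have h2 : Commute ((2 * Complex.I) • (1 : H →L[ℂ] H)) iB :=
      (Commute.one_left iB).smul_left _
    have e : B - Complex.I • 1 = sB - (2 * Complex.I) • 1 := by
      rw [hsB, two_mul, add_smul]; abel
    rw [e]
    exact h1.sub_left h2
  have e1 : sB * ((B - Complex.I • 1) * iB) = B - Complex.I • 1 := by
    rw [cB.eq, ← mul_assoc, mB, one_mul]
  have e2 : ((A - Complex.I • 1) * iA) * sA = A - Complex.I • 1 := by
    rw [mul_assoc, mA', mul_one]
  apply hUB.mul_left_cancel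
  have hr : ∀ x y : H →L[ℂ] H, x * sA = y * sA → x = y := fun x y h =>
    hUA.mul_right_cancel h
  apply hr
  calc sB * (((B - Complex.I • 1) * iB) * R - R * ((A - Complex.I • 1) * iA)) * sA
      = (sB * ((B - Complex.I • 1) * iB)) * R * sA
        - sB * R * (((A - Complex.I • 1) * iA) * sA) := by noncomm_ring
    _ = (B - Complex.I • 1) * R * sA - sB * R * (A - Complex.I • 1) := by rw [e1, e2]
    _ = (2 * Complex.I) • (B * R - R * A) := by
        rw [hsA, hsB]
        simp only [sub_mul, mul_sub, add_mul, mul_add, smul_mul_assoc, mul_smul_comm,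
          one_mul, mul_one, smul_smul, smul_sub, smul_add, two_mul, add_smul]
        abel
    _ = sB * ((2 * Complex.I) • (iB * (B * R - R * A) * iA)) * sA := by
        rw [mul_smul_comm, smul_mul_assoc]
        congr 1
        symm
        calc sB * (iB * (B * R - R * A) * iA) * sA
            = (sB * iB) * (B * R - R * A) * (iA * sA) := by noncomm_ring
          _ = B * R - R * A := by rw [mA', mB]; simp

/-- The identity inside the proof of (a) ⇒ (c) of Theorem 7.1: for bounded self-adjoint
operators `A, B` and any bounded operator `R`, with Cayley transforms
`U = (A − iI)(A + iI)⁻¹` and `V = (B − iI)(B + iI)⁻¹`, one has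
`V R − R U = 2i (B + iI)⁻¹ (B R − R A)(A + iI)⁻¹`, and hence
`‖V R − R U‖ = 2 ‖(B + iI)⁻¹ (B R − R A)(A + iI)⁻¹‖`. -/
theorem stmt9 {H : Type*} [NormedAddCommGroup H] [InnerProductSpace ℂ H] [CompleteSpace H]
    (A B R : H →L[ℂ] H) (hA : IsSelfAdjoint A) (hB : IsSelfAdjoint B) :
    ((B - Complex.I • 1) * Ring.inverse (B + Complex.I • 1)) * R -
        R * ((A - Complex.I • 1) * Ring.inverse (A + Complex.I • 1)) =
      (2 * Complex.I) •
        (Ring.inverse (B + Complex.I • 1) * (B * R - R * A) *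
          Ring.inverse (A + Complex.I • 1)) ∧
    ‖((B - Complex.I • 1) * Ring.inverse (B + Complex.I • 1)) * R -
        R * ((A - Complex.I • 1) * Ring.inverse (A + Complex.I • 1))‖ =
      2 * ‖Ring.inverse (B + Complex.I • 1) * (B * R - R * A) *
          Ring.inverse (A + Complex.I • 1)‖ := by
  have h := stmt9_aux_id A B R hA hB
  refine ⟨h, ?_⟩
  rw [h, norm_smul]
  congr 1
  simp
end

section
/- Let φ : ℂ → ℂ be a continuous function and let C ≥ 0 be such that for every complex Hilbert space H, all unitary operators U, V on H and every bounded operator R on H one has ‖φ(V) R − R φ(U)‖ ≤ C·‖V R − R U‖. Then for every complex Hilbert space H, all bounded self-adjoint operators A, B on H and every bounded operator R on H, setting U = (A − iI)(A + iI)⁻¹ and V = (B − iI)(B + iI)⁻¹, one has ‖φ(V) R − R φ(U)‖ ≤ 2C·‖(B R − R A)(A + iI)⁻¹‖. -/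
set_option maxHeartbeats 1000000

open Complex

universe u

section aux

variable {A : Type*} [CStarAlgebra A] [StarModule ℂ A]

lemma aux_isUnit_add {a : A} (ha : IsSelfAdjoint a) : IsUnit (a + Complex.I • (1:A)) := by
  have hns : (-Complex.I) ∉ spectrum ℂ a := by
    intro hz
    have := ha.im_eq_zero_of_mem_spectrum hz
    simp at this
  rw [spectrum.notMem_iff] at hns
  have heq : algebraMap ℂ A (-Complex.I) - a = -(a + Complex.I • (1:A)) := by
    rw [Algebra.algebraMap_eq_smul_one]
    module
  rw [heq] at hns
  simpa using hns.neg

lemma aux_isUnit_sub {a : A} (ha : IsSelfAdjoint a) : IsUnit (a - Complex.I • (1:A)) := by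
  have hns : (Complex.I) ∉ spectrum ℂ a := by
    intro hz
    have := ha.im_eq_zero_of_mem_spectrum hz
    simp at this
  rw [spectrum.notMem_iff] at hns
  have heq : algebraMap ℂ A (Complex.I) - a = -(a - Complex.I • (1:A)) := by
    rw [Algebra.algebraMap_eq_smul_one]
    module
  rw [heq] at hns
  simpa using hns.neg

lemma aux_star_add {a : A} (ha : IsSelfAdjoint a) :
    star (a + Complex.I • (1:A)) = a - Complex.I • (1:A) := by
  simp [star_smul, ha.star_eq, Complex.star_def, Complex.conj_I, sub_eq_add_neg, neg_smul]

lemma aux_star_sub {a : A} (ha : IsSelfAdjoint a) :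
    star (a - Complex.I • (1:A)) = a + Complex.I • (1:A) := by
  simp [star_smul, ha.star_eq, Complex.star_def, Complex.conj_I, sub_eq_add_neg, neg_smul]

lemma aux_commute {a : A} :
    Commute (a - Complex.I • (1:A)) (a + Complex.I • (1:A)) := by
  have c : Commute a (Complex.I • (1:A)) := (Commute.one_right a).smul_right Complex.I
  exact ((Commute.refl a).sub_left c.symm).add_right (c.sub_left (Commute.refl _))

lemma aux_cayley_mem {a : A} (ha : IsSelfAdjoint a) :
    (a - Complex.I • (1:A)) * Ring.inverse (a + Complex.I • (1:A)) ∈ unitary A := by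
  have hP := aux_isUnit_add ha
  have hM := aux_isUnit_sub ha
  have hPe : (a + Complex.I • (1:A)) = ↑hP.unit := hP.unit_spec.symm
  have hMe : (a - Complex.I • (1:A)) = ↑hM.unit := hM.unit_spec.symm
  set P := hP.unit
  set M := hM.unit
  have hc : (P : A) * ↑M = ↑M * ↑P := by
    rw [← hPe, ← hMe]; exact aux_commute.symm
  have cu : P * M = M * P := Units.ext (by simpa using hc)
  have cu' : P⁻¹ * M⁻¹ = M⁻¹ * P⁻¹ := (Commute.inv_inv cu)
  have hc2 : ((P⁻¹ : Aˣ) : A) * ↑M⁻¹ = ↑M⁻¹ * ↑P⁻¹ := by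
    have := congrArg Units.val cu'; simpa using this
  rw [Unitary.mem_iff, hPe, hMe, Ring.inverse_unit]
  have hstar : star ((M : A) * ↑P⁻¹) = (↑M⁻¹ : A) * ↑P := by
    rw [star_mul]
    have h1 : star ((P⁻¹ : Aˣ) : A) = ↑M⁻¹ := by
      have : star ((P : Aˣ) : A) = ↑M := by rw [← hPe, ← hMe]; exact aux_star_add ha
      calc star ((P⁻¹ : Aˣ) : A) = ↑M⁻¹ * (↑M * star ((P⁻¹ : Aˣ) : A)) := by
              simp [← mul_assoc]
        _ = ↑M⁻¹ * (star ((P : Aˣ) : A) * star ((P⁻¹ : Aˣ) : A)) := by rw [this]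
        _ = ↑M⁻¹ * star (((P⁻¹ : Aˣ) : A) * ↑P) := by rw [star_mul]
        _ = ↑M⁻¹ := by simp
    have h2 : star ((M : A)) = ↑P := by rw [← hPe, ← hMe]; exact aux_star_sub ha
    rw [h1, h2]
  rw [hstar]
  constructor
  · calc (↑M⁻¹ : A) * ↑P * (↑M * ↑P⁻¹) = ↑M⁻¹ * ((↑P * ↑M) * ↑P⁻¹) := by
          simp [mul_assoc]
      _ = ↑M⁻¹ * ((↑M * ↑P) * ↑P⁻¹) := by rw [hc]
      _ = 1 := by simp [mul_assoc]
  · calc (↑M : A) * ↑P⁻¹ * (↑M⁻¹ * ↑P) = ↑M * ((↑P⁻¹ * ↑M⁻¹) * ↑P) := by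
          simp [mul_assoc]
      _ = ↑M * ((↑M⁻¹ * ↑P⁻¹) * ↑P) := by rw [hc2]
      _ = 1 := by simp [mul_assoc]

lemma aux_norm_one_le : ‖(1:A)‖ ≤ 1 := by
  have h := CStarRing.norm_star_mul_self (x := (1:A))
  simp only [star_one, mul_one] at h
  nlinarith [norm_nonneg (1:A)]

lemma aux_unitary_norm_le {u : A} (hu : u ∈ unitary A) : ‖u‖ ≤ 1 := by
  have h1 : star u * u = 1 := (Unitary.mem_iff.mp hu).1
  have h := CStarRing.norm_star_mul_self (x := u)
  rw [h1] at h
  nlinarith [norm_nonneg u, aux_norm_one_le (A := A)]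

lemma aux_inverse_norm_le {a : A} (ha : IsSelfAdjoint a) :
    ‖Ring.inverse (a + Complex.I • (1:A))‖ ≤ 1 := by
  have hP := aux_isUnit_add ha
  set u := (a - Complex.I • (1:A)) * Ring.inverse (a + Complex.I • (1:A)) with hu_def
  have hu := aux_cayley_mem ha
  have hd : a - Complex.I • (1:A) - (a + Complex.I • (1:A)) = (-(2*Complex.I)) • (1:A) := by
    module
  have h1 : u - 1 = (-(2*Complex.I)) • Ring.inverse (a + Complex.I • (1:A)) := by
    calc u - 1 = (a - Complex.I • (1:A)) * Ring.inverse (a + Complex.I • (1:A)) -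
          (a + Complex.I • (1:A)) * Ring.inverse (a + Complex.I • (1:A)) := by
            rw [Ring.mul_inverse_cancel _ hP, hu_def]
      _ = (a - Complex.I • (1:A) - (a + Complex.I • (1:A))) * Ring.inverse (a + Complex.I • (1:A)) := by
            exact (sub_mul _ _ _).symm
      _ = (-(2*Complex.I)) • Ring.inverse (a + Complex.I • (1:A)) := by
            rw [hd, smul_mul_assoc, one_mul]
  have key : Ring.inverse (a + Complex.I • (1:A)) = ((-(2*Complex.I))⁻¹) • (u - 1) := by
    rw [h1, smul_smul, inv_mul_cancel₀ (by simp [Complex.I_ne_zero]), one_smul]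
  rw [key, norm_smul]
  have hn : ‖(-(2*Complex.I))⁻¹‖ = 1/2 := by
    simp [norm_inv]
  rw [hn]
  have : ‖u - 1‖ ≤ 2 := by
    calc ‖u - 1‖ ≤ ‖u‖ + ‖(1:A)‖ := norm_sub_le _ _
      _ ≤ 1 + 1 := add_le_add (aux_unitary_norm_le hu) aux_norm_one_le
      _ = 2 := by norm_num
  linarith

lemma aux_identity {a b r : A} (ha : IsSelfAdjoint a) (hb : IsSelfAdjoint b) :
    (b - Complex.I • (1:A)) * Ring.inverse (b + Complex.I • (1:A)) * r -
      r * ((a - Complex.I • (1:A)) * Ring.inverse (a + Complex.I • (1:A))) =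
    (2*Complex.I) • (Ring.inverse (b + Complex.I • (1:A)) *
      ((b * r - r * a) * Ring.inverse (a + Complex.I • (1:A)))) := by
  have hPu := aux_isUnit_add ha
  have hQu := aux_isUnit_add hb
  have hPe : (a + Complex.I • (1:A)) = ↑hPu.unit := hPu.unit_spec.symm
  have hQe : (b + Complex.I • (1:A)) = ↑hQu.unit := hQu.unit_spec.symm
  set P := hPu.unit
  set Q := hQu.unit
  rw [hPe, hQe, Ring.inverse_unit, Ring.inverse_unit]
  set X := (b - Complex.I • (1:A)) * ↑Q⁻¹ * r - r * ((a - Complex.I • (1:A)) * ↑P⁻¹) with hX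
  have hQV : (Q : A) * ((b - Complex.I • (1:A)) * ↑Q⁻¹) = b - Complex.I • (1:A) := by
    have hc : (Q : A) * (b - Complex.I • (1:A)) = (b - Complex.I • (1:A)) * ↑Q := by
      rw [← hQe]; exact aux_commute.symm
    calc (Q : A) * ((b - Complex.I • (1:A)) * ↑Q⁻¹)
        = ((Q : A) * (b - Complex.I • (1:A))) * ↑Q⁻¹ := by rw [mul_assoc]
      _ = ((b - Complex.I • (1:A)) * ↑Q) * ↑Q⁻¹ := by rw [hc]
      _ = b - Complex.I • (1:A) := by simp [mul_assoc]
  have hUP : ((a - Complex.I • (1:A)) * ↑P⁻¹) * ↑P = a - Complex.I • (1:A) := by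
    simp [mul_assoc]
  have h1 : (Q : A) * X * ↑P = (2*Complex.I) • (b * r - r * a) := by
    rw [hX, mul_sub, sub_mul]
    have e1 : (Q:A) * ((b - Complex.I • (1:A)) * ↑Q⁻¹ * r) * ↑P
        = (b - Complex.I • (1:A)) * r * (a + Complex.I • (1:A)) := by
      rw [← mul_assoc ((Q:A)) _ r, hQV, hPe]
    have e2 : (Q:A) * (r * ((a - Complex.I • (1:A)) * ↑P⁻¹)) * ↑P
        = (b + Complex.I • (1:A)) * r * (a - Complex.I • (1:A)) := by
      calc (Q:A) * (r * ((a - Complex.I • (1:A)) * ↑P⁻¹)) * ↑P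
          = (Q:A) * (r * ((a - Complex.I • (1:A)) * ↑P⁻¹ * ↑P)) := by
            rw [mul_assoc ((Q:A)), mul_assoc r]
        _ = (b + Complex.I • (1:A)) * (r * (a - Complex.I • (1:A))) := by rw [hUP, ← hQe]
        _ = (b + Complex.I • (1:A)) * r * (a - Complex.I • (1:A)) := by rw [mul_assoc]
    rw [e1, e2]
    simp only [sub_mul, mul_sub, mul_add, add_mul, smul_mul_assoc, mul_smul_comm,
      one_mul, mul_one, mul_assoc, smul_smul]
    module
  have h2 : X = (↑Q⁻¹ : A) * ((Q : A) * X * ↑P) * ↑P⁻¹ := by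
    simp [mul_assoc]
  rw [h2, h1]
  simp [mul_smul_comm, smul_mul_assoc, mul_assoc]

end aux

/-- Quantitative content of (a) ⇒ (c) in the proof of Theorem 7.1: if a continuous
`φ : ℂ → ℂ` satisfies `‖φ(V) R − R φ(U)‖ ≤ C ‖V R − R U‖` for all unitaries `U, V` and
all bounded `R` on every complex Hilbert space, then for all bounded self-adjoint
`A, B` and bounded `R`, taking `U, V` to be the Cayley transforms of `A, B`, one has
`‖φ(V) R − R φ(U)‖ ≤ 2 C ‖(B R − R A)(A + iI)⁻¹‖`. -/
theorem stmt10 (φ : ℂ → ℂ) (hφ : Continuous φ) (C : ℝ) (hC : 0 ≤ C)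
    (h : ∀ (H : Type u) (_ : NormedAddCommGroup H) (_ : InnerProductSpace ℂ H)
      (_ : CompleteSpace H) (U V R : H →L[ℂ] H),
      U ∈ unitary (H →L[ℂ] H) → V ∈ unitary (H →L[ℂ] H) →
      ‖cfc φ V * R - R * cfc φ U‖ ≤ C * ‖V * R - R * U‖) :
    ∀ (H : Type u) (_ : NormedAddCommGroup H) (_ : InnerProductSpace ℂ H)
      (_ : CompleteSpace H) (A B R : H →L[ℂ] H),
      IsSelfAdjoint A → IsSelfAdjoint B →
      ‖cfc φ ((B - Complex.I • 1) * Ring.inverse (B + Complex.I • 1)) * R -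
          R * cfc φ ((A - Complex.I • 1) * Ring.inverse (A + Complex.I • 1))‖ ≤
        2 * C * ‖(B * R - R * A) * Ring.inverse (A + Complex.I • 1)‖ := by
  intro H _ _ _ A B R hA hB
  have hU := aux_cayley_mem (A := H →L[ℂ] H) hA
  have hV := aux_cayley_mem (A := H →L[ℂ] H) hB
  have hmain := h H inferInstance inferInstance inferInstance
    ((A - Complex.I • 1) * Ring.inverse (A + Complex.I • 1))
    ((B - Complex.I • 1) * Ring.inverse (B + Complex.I • 1)) R hU hV
  refine hmain.trans ?_
  rw [aux_identity hA hB, norm_smul]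
  have h2I : ‖(2 * Complex.I)‖ = 2 := by simp
  rw [h2I]
  set Y := (B * R - R * A) * Ring.inverse (A + Complex.I • (1 : H →L[ℂ] H)) with hY
  have hb1 : ‖Ring.inverse (B + Complex.I • (1 : H →L[ℂ] H))‖ ≤ 1 := aux_inverse_norm_le hB
  have key : ‖Ring.inverse (B + Complex.I • (1 : H →L[ℂ] H)) * Y‖ ≤ ‖Y‖ := by
    refine (norm_mul_le _ _).trans ?_
    nlinarith [norm_nonneg Y]
  nlinarith [norm_nonneg Y, norm_nonneg (Ring.inverse (B + Complex.I • (1 : H →L[ℂ] H)) * Y)]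
end
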